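/- (Test for modular weak factorization in call-by-value) Let →βv be βv-reduction and →γ the contextual closure of a root rule ↦γ on untyped λ-terms with constants. If (1) →γ satisfies weak factorization F(w→γ, ¬w→γ), (2) the root linear swap ¬w→βv · ↦γ ⊆ w→γ · (→βv)* holds, and (3) ↦γ is substitutive, then →βv ∪ →γ satisfies weak factorization: (→βv ∪ →γ)* ⊆ (w→βv ∪ w→γ)* · (¬w→βv ∪ ¬w→γ)*. -/

import Mathlib

/-! Untyped λ-terms over a set `K` of constants, in de Bruijn representation
(so that working modulo α-equivalence and capture-avoiding substitution are
built in). -/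

inductive Term (K : Type) : Type where
  | var : ℕ → Term K
  | const : K → Term K
  | lam : Term K → Term K
  | app : Term K → Term K → Term K

namespace Term

variable {K : Type}

/-- Shifting of free de Bruijn indices (≥ cutoff `c`) by one. -/
def lift (c : ℕ) : Term K → Term K
  | var m => if m < c then var m else var (m + 1)
  | const k => const k
  | lam t => lam (lift (c + 1) t)
  | app t s => app (lift c t) (lift c s)

/-- Capture-avoiding substitution of `u` for the free variable `n`. -/
def subst (n : ℕ) (u : Term K) : Term K → Term K
  | var m => if m = n then u else if n < m then var (m - 1) else var m
  | const k => const k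
  | lam t => lam (subst (n + 1) (lift 0 u) t)
  | app t s => app (subst n u t) (subst n u s)

/-- Values: variables, constants and abstractions. -/
def IsValue : Term K → Prop
  | var _ => True
  | const _ => True
  | lam _ => True
  | app _ _ => False

end Term

/-- One-hole contexts: C ::= ⟨·⟩ | C t | t C | λ.C -/
inductive Ctx (K : Type) : Type where
  | hole : Ctx K
  | appL : Ctx K → Term K → Ctx K
  | appR : Term K → Ctx K → Ctx K
  | lam : Ctx K → Ctx K

namespace Ctx

variable {K : Type}

/-- Plugging a term into the hole of a context (possibly capturing variables). -/
def plug : Ctx K → Term K → Term K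
  | hole, t => t
  | appL C s, t => Term.app (C.plug t) s
  | appR s C, t => Term.app s (C.plug t)
  | lam C, t => Term.lam (C.plug t)

/-- Applicative spine contexts ⟨·⟩ t1 … tn. -/
inductive IsSpine : Ctx K → Prop
  | hole : IsSpine hole
  | appL {C : Ctx K} (t : Term K) : IsSpine C → IsSpine (appL C t)

/-- Head contexts λx1…λxk.⟨·⟩ t1…tn. -/
inductive IsHead : Ctx K → Prop
  | spine {C : Ctx K} : IsSpine C → IsHead C
  | lam {C : Ctx K} : IsHead C → IsHead (lam C)

/-- Weak contexts W ::= ⟨·⟩ | W t | t W. -/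
inductive IsWeak : Ctx K → Prop
  | hole : IsWeak hole
  | appL {C : Ctx K} (t : Term K) : IsWeak C → IsWeak (appL C t)
  | appR (t : Term K) {C : Ctx K} : IsWeak C → IsWeak (appR t C)

/-- Left contexts L ::= ⟨·⟩ | L t | v L with v a value. -/
inductive IsLeft : Ctx K → Prop
  | hole : IsLeft hole
  | appL {C : Ctx K} (t : Term K) : IsLeft C → IsLeft (appL C t)
  | appR {v : Term K} {C : Ctx K} : v.IsValue → IsLeft C → IsLeft (appR v C)

end Ctx

/-- Contextual closure of a root rule. -/
def Step {K : Type} (root : Term K → Term K → Prop) (t s : Term K) : Prop :=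
  ∃ (C : Ctx K) (r r' : Term K), root r r' ∧ t = C.plug r ∧ s = C.plug r'

/-- Closure of a root rule under head contexts. -/
def HeadStep {K : Type} (root : Term K → Term K → Prop) (t s : Term K) : Prop :=
  ∃ (C : Ctx K) (r r' : Term K), C.IsHead ∧ root r r' ∧ t = C.plug r ∧ s = C.plug r'

/-- Closure of a root rule under non-head contexts. -/
def NonHeadStep {K : Type} (root : Term K → Term K → Prop) (t s : Term K) : Prop :=
  ∃ (C : Ctx K) (r r' : Term K), ¬ C.IsHead ∧ root r r' ∧ t = C.plug r ∧ s = C.plug r'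

/-- Closure of a root rule under weak contexts. -/
def WeakStep {K : Type} (root : Term K → Term K → Prop) (t s : Term K) : Prop :=
  ∃ (C : Ctx K) (r r' : Term K), C.IsWeak ∧ root r r' ∧ t = C.plug r ∧ s = C.plug r'

/-- Closure of a root rule under non-weak contexts. -/
def NonWeakStep {K : Type} (root : Term K → Term K → Prop) (t s : Term K) : Prop :=
  ∃ (C : Ctx K) (r r' : Term K), ¬ C.IsWeak ∧ root r r' ∧ t = C.plug r ∧ s = C.plug r'

/-- Closure of a root rule under left contexts. -/
def LeftStep {K : Type} (root : Term K → Term K → Prop) (t s : Term K) : Prop :=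
  ∃ (C : Ctx K) (r r' : Term K), C.IsLeft ∧ root r r' ∧ t = C.plug r ∧ s = C.plug r'

/-- Closure of a root rule under non-left contexts. -/
def NonLeftStep {K : Type} (root : Term K → Term K → Prop) (t s : Term K) : Prop :=
  ∃ (C : Ctx K) (r r' : Term K), ¬ C.IsLeft ∧ root r r' ∧ t = C.plug r ∧ s = C.plug r'

/-- A root rule is substitutive if it is stable under substitution. -/
def Substitutive {K : Type} (root : Term K → Term K → Prop) : Prop :=
  ∀ r r' n q, root r r' → root (Term.subst n q r) (Term.subst n q r')

/-- The β root rule: (λx.p) q ↦β p{x:=q}. -/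
def BetaRoot {K : Type} : Term K → Term K → Prop := fun t s =>
  ∃ p q, t = Term.app (Term.lam p) q ∧ s = Term.subst 0 q p

/-- The βv root rule: (λx.p) v ↦βv p{x:=v}, v a value. -/
def BetavRoot {K : Type} : Term K → Term K → Prop := fun t s =>
  ∃ p v, v.IsValue ∧ t = Term.app (Term.lam p) v ∧ s = Term.subst 0 v p

set_option linter.unusedTactic false
set_option linter.unreachableTactic false
set_option linter.unnecessarySeqFocus false

namespace Term

variable {K : Type}

theorem lift_lift {c c' : ℕ} (h : c ≤ c') (t : Term K) :
    lift c (lift c' t) = lift (c' + 1) (lift c t) := by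
  induction t generalizing c c' with
  | var m =>
    simp only [lift]
    split_ifs <;> simp only [lift] <;> (try split_ifs) <;>
      first | rfl | omega | (simp only [var.injEq]; omega) | (exfalso; omega)
  | const k => rfl
  | lam t ih => simp [lift, ih (by omega : c + 1 ≤ c' + 1)]
  | app t s iht ihs => simp [lift, iht h, ihs h]

theorem subst_lift (n : ℕ) (u t : Term K) : subst n u (lift n t) = t := by
  induction t generalizing n u with
  | var m =>
    simp only [lift]
    split_ifs <;> simp only [subst] <;> (try split_ifs) <;>
      first | rfl | omega | (simp only [var.injEq]; omega) | (exfalso; omega)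
  | const k => rfl
  | lam t ih => simp [lift, subst, ih]
  | app t s iht ihs => simp [lift, subst, iht, ihs]

theorem lift_subst_le {n c : ℕ} (h : n ≤ c) (u t : Term K) :
    lift c (subst n u t) = subst n (lift c u) (lift (c + 1) t) := by
  induction t generalizing n c u with
  | var m =>
    simp only [subst, lift]
    split_ifs <;> (try simp only [subst, lift]) <;> (try split_ifs) <;>
      first | rfl | omega | (simp only [var.injEq]; omega) | (exfalso; omega)
  | const k => rfl
  | lam t ih =>
    simp only [subst, lift, lam.injEq]
    rw [ih (by omega), lift_lift (Nat.zero_le c)]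
  | app t s iht ihs => simp [subst, lift, iht h, ihs h]

theorem lift_subst_ge {n c : ℕ} (h : c ≤ n) (u t : Term K) :
    lift c (subst n u t) = subst (n + 1) (lift c u) (lift c t) := by
  induction t generalizing n c u with
  | var m =>
    simp only [subst, lift]
    split_ifs <;> (try simp only [subst, lift]) <;> (try split_ifs) <;>
      first | rfl | omega | (simp only [var.injEq]; omega) | (exfalso; omega)
  | const k => rfl
  | lam t ih =>
    simp only [subst, lift, lam.injEq]
    rw [ih (by omega), lift_lift (Nat.zero_le c)]
  | app t s iht ihs => simp [subst, lift, iht h, ihs h]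

theorem subst_subst {i n : ℕ} (h : i ≤ n) (q v t : Term K) :
    subst n q (subst i v t) = subst i (subst n q v) (subst (n + 1) (lift i q) t) := by
  induction t generalizing i n q v with
  | var m =>
    simp only [subst]
    split_ifs <;> (try simp only [subst, lift]) <;> (try split_ifs) <;>
      first | rfl | omega | (simp only [var.injEq]; omega) | (rw [subst_lift]) | (exfalso; omega)
  | const k => rfl
  | lam t ih =>
    simp only [subst, lam.injEq]
    rw [ih (by omega), lift_subst_ge (Nat.zero_le n), lift_lift (Nat.zero_le i)]
  | app t s iht ihs => simp [subst, iht h, ihs h]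

theorem IsValue.lift {v : Term K} (h : v.IsValue) (c : ℕ) : (lift c v).IsValue := by
  cases v <;> simp_all [Term.lift, IsValue] <;> split_ifs <;> simp [IsValue]

theorem IsValue.subst {v q : Term K} (hv : v.IsValue) (hq : q.IsValue) (n : ℕ) :
    (Term.subst n q v).IsValue := by
  cases v <;> simp_all [Term.subst, IsValue] <;> split_ifs <;> simp_all [IsValue]

end Term
namespace Term

variable {K : Type}

/-- All free variables (suitably adjusted under binders) are `< N`. -/
def VarsLt : ℕ → Term K → Prop
  | N, var m => m < N
  | _, const _ => True
  | N, lam t => VarsLt (N + 1) t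
  | N, app t s => VarsLt N t ∧ VarsLt N s

theorem VarsLt.mono {N M : ℕ} (h : N ≤ M) {t : Term K} (ht : VarsLt N t) :
    VarsLt M t := by
  induction t generalizing N M with
  | var m => simp_all [VarsLt]; omega
  | const k => trivial
  | lam t ih => exact ih (by omega) ht
  | app t s iht ihs => exact ⟨iht h ht.1, ihs h ht.2⟩

theorem exists_varsLt (t : Term K) : ∃ N, VarsLt N t := by
  induction t with
  | var m => exact ⟨m + 1, by simp [VarsLt]⟩
  | const k => exact ⟨0, trivial⟩
  | lam t ih => obtain ⟨N, hN⟩ := ih; exact ⟨N, hN.mono (by omega) |>.mono (le_refl _)⟩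
  | app t s iht ihs =>
    obtain ⟨N, hN⟩ := iht; obtain ⟨M, hM⟩ := ihs
    exact ⟨max N M, hN.mono (le_max_left _ _), hM.mono (le_max_right _ _)⟩

/-- Partial shift: intermediate stages of realizing `lift c` via substitutions. -/
def pshift (c N i : ℕ) : Term K → Term K
  | var m => var (if m < c then m else if m < c + i then m - c + (N - i) + 1 else m - i)
  | const k => const k
  | lam t => lam (pshift (c + 1) (N + 1) i t)
  | app t s => app (pshift c N i t) (pshift c N i s)

theorem pshift_zero (c N : ℕ) (t : Term K) : pshift c N 0 t = t := by
  induction t generalizing c N with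
  | var m => simp only [pshift]; split_ifs <;> simp only [var.injEq] <;> omega
  | const k => rfl
  | lam t ih => simp [pshift, ih]
  | app t s iht ihs => simp [pshift, iht, ihs]

theorem pshift_last {c N : ℕ} (h : c ≤ N) {t : Term K} (ht : VarsLt N t) :
    pshift c N (N - c) t = lift c t := by
  induction t generalizing c N with
  | var m =>
    simp only [pshift, lift, VarsLt] at *
    split_ifs <;> simp only [var.injEq] <;> omega
  | const k => rfl
  | lam t ih => simp only [pshift, lift, lam.injEq]
               ; have := ih (by omega : c + 1 ≤ N + 1) ht
               ; simpa [Nat.succ_sub_succ] using this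
  | app t s iht ihs => simp [pshift, lift, iht h ht.1, ihs h ht.2]

theorem pshift_step {c N i : ℕ} (hc : c ≤ N) (hi : i < N - c) {t : Term K}
    (ht : VarsLt N t) :
    subst c (var N) (pshift c N i t) = pshift c N (i + 1) t := by
  induction t generalizing c N with
  | var m =>
    simp only [pshift, subst, VarsLt] at *
    split_ifs <;> simp only [var.injEq] <;> omega
  | const k => rfl
  | lam t ih =>
    simp only [pshift, subst, lam.injEq, lift]
    exact ih (by omega) (by omega) ht
  | app t s iht ihs => simp [pshift, subst, iht hc hi ht.1, ihs hc hi ht.2]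

/-- A substitutive root rule is stable under lifting. -/
theorem root_lift {R : Term K → Term K → Prop} (hsub : Substitutive R)
    {r r' : Term K} (h : R r r') (c : ℕ) : R (lift c r) (lift c r') := by
  obtain ⟨N₁, h₁⟩ := exists_varsLt r
  obtain ⟨N₂, h₂⟩ := exists_varsLt r'
  set N := max (max N₁ N₂) c with hN
  have hc : c ≤ N := le_max_right _ _
  have hr : VarsLt N r := h₁.mono (le_trans (le_max_left _ _) (le_max_left _ _))
  have hr' : VarsLt N r' := h₂.mono (le_trans (le_max_right _ _) (le_max_left _ _))
  have key : ∀ i, i ≤ N - c → R (pshift c N i r) (pshift c N i r') := by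
    intro i
    induction i with
    | zero => intro _; simpa [pshift_zero] using h
    | succ j ih =>
      intro hj
      have := hsub _ _ c (var N) (ih (by omega))
      rwa [pshift_step hc (by omega) hr, pshift_step hc (by omega) hr'] at this
  have := key (N - c) (le_refl _)
  rwa [pshift_last hc hr, pshift_last hc hr'] at this

end Term
open Term Relation

variable {K : Type}

/-- Inductive form of the contextual closure. -/
inductive St (R : Term K → Term K → Prop) : Term K → Term K → Prop
  | root {r r'} : R r r' → St R r r'
  | appL {t t'} (s) : St R t t' → St R (.app t s) (.app t' s)
  | appR (t) {s s'} : St R s s' → St R (.app t s) (.app t s')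
  | lam {t t'} : St R t t' → St R (.lam t) (.lam t')

/-- Inductive form of the weak closure. -/
inductive Wk (R : Term K → Term K → Prop) : Term K → Term K → Prop
  | root {r r'} : R r r' → Wk R r r'
  | appL {t t'} (s) : Wk R t t' → Wk R (.app t s) (.app t' s)
  | appR (t) {s s'} : Wk R s s' → Wk R (.app t s) (.app t s')

/-- Inductive form of the non-weak closure. -/
inductive NWk (R : Term K → Term K → Prop) : Term K → Term K → Prop
  | lam {t t'} : St R t t' → NWk R (.lam t) (.lam t')
  | appL {t t'} (s) : NWk R t t' → NWk R (.app t s) (.app t' s)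
  | appR (t) {s s'} : NWk R s s' → NWk R (.app t s) (.app t s')

theorem Wk.st {R : Term K → Term K → Prop} {t s} (h : Wk R t s) : St R t s := by
  induction h with
  | root h => exact .root h
  | appL s _ ih => exact .appL s ih
  | appR t _ ih => exact .appR t ih

theorem NWk.st {R : Term K → Term K → Prop} {t s} (h : NWk R t s) : St R t s := by
  induction h with
  | lam h => exact .lam h
  | appL s _ ih => exact .appL s ih
  | appR t _ ih => exact .appR t ih

theorem st_wk_or_nwk {R : Term K → Term K → Prop} {t s} (h : St R t s) :
    Wk R t s ∨ NWk R t s := by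
  induction h with
  | root h => exact .inl (.root h)
  | appL s _ ih => exact ih.imp (.appL s) (.appL s)
  | appR t _ ih => exact ih.imp (.appR t) (.appR t)
  | lam h _ => exact .inr (.lam h)

/-- Plugging the same step into any context. -/
theorem st_plug {R : Term K → Term K → Prop} (C : Ctx K) {r r'} (h : R r r') :
    St R (C.plug r) (C.plug r') := by
  induction C with
  | hole => exact .root h
  | appL C t ih => exact .appL t ih
  | appR t C ih => exact .appR t ih
  | lam C ih => exact .lam ih

theorem step_st {R : Term K → Term K → Prop} {t s} (h : Step R t s) : St R t s := by
  obtain ⟨C, r, r', h, rfl, rfl⟩ := h; exact st_plug C h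

theorem st_step {R : Term K → Term K → Prop} {t s} (h : St R t s) : Step R t s := by
  induction h with
  | root h => exact ⟨.hole, _, _, h, rfl, rfl⟩
  | appL s _ ih => obtain ⟨C, r, r', h, rfl, rfl⟩ := ih; exact ⟨.appL C s, r, r', h, rfl, rfl⟩
  | appR t _ ih => obtain ⟨C, r, r', h, rfl, rfl⟩ := ih; exact ⟨.appR t C, r, r', h, rfl, rfl⟩
  | lam _ ih => obtain ⟨C, r, r', h, rfl, rfl⟩ := ih; exact ⟨.lam C, r, r', h, rfl, rfl⟩

theorem weakStep_wk {R : Term K → Term K → Prop} {t s} (h : WeakStep R t s) :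
    Wk R t s := by
  obtain ⟨C, r, r', hC, h, rfl, rfl⟩ := h
  induction hC with
  | hole => exact .root h
  | appL t _ ih => exact .appL t ih
  | appR t _ ih => exact .appR t ih

theorem wk_weakStep {R : Term K → Term K → Prop} {t s} (h : Wk R t s) :
    WeakStep R t s := by
  induction h with
  | root h => exact ⟨.hole, _, _, .hole, h, rfl, rfl⟩
  | appL s _ ih =>
    obtain ⟨C, r, r', hC, h, rfl, rfl⟩ := ih
    exact ⟨.appL C s, r, r', .appL s hC, h, rfl, rfl⟩
  | appR t _ ih =>
    obtain ⟨C, r, r', hC, h, rfl, rfl⟩ := ih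
    exact ⟨.appR t C, r, r', .appR t hC, h, rfl, rfl⟩

theorem nonWeakStep_nwk {R : Term K → Term K → Prop} {t s} (h : NonWeakStep R t s) :
    NWk R t s := by
  obtain ⟨C, r, r', hC, h, rfl, rfl⟩ := h
  induction C with
  | hole => exact absurd Ctx.IsWeak.hole hC
  | appL C t ih =>
    exact .appL t (ih (fun hw => hC (.appL t hw)))
  | appR t C ih =>
    exact .appR t (ih (fun hw => hC (.appR t hw)))
  | lam C _ => exact .lam (st_plug C h)

theorem nwk_nonWeakStep {R : Term K → Term K → Prop} {t s} (h : NWk R t s) :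
    NonWeakStep R t s := by
  induction h with
  | lam h =>
    obtain ⟨C, r, r', hr, rfl, rfl⟩ := st_step h
    refine ⟨.lam C, r, r', ?_, hr, rfl, rfl⟩
    intro hw; cases hw
  | appL s _ ih =>
    obtain ⟨C, r, r', hC, h, rfl, rfl⟩ := ih
    refine ⟨.appL C s, r, r', ?_, h, rfl, rfl⟩
    intro hw; cases hw with | appL _ hw => exact hC hw
  | appR t _ ih =>
    obtain ⟨C, r, r', hC, h, rfl, rfl⟩ := ih
    refine ⟨.appR t C, r, r', ?_, h, rfl, rfl⟩
    intro hw; cases hw with | appR _ hw => exact hC hw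

/-- Substitutivity of the contextual closure. -/
theorem St.subst {R : Term K → Term K → Prop} (hsub : Substitutive R) {t s}
    (h : St R t s) (n : ℕ) (q : Term K) :
    St R (Term.subst n q t) (Term.subst n q s) := by
  induction h generalizing n q with
  | root h => exact .root (hsub _ _ n q h)
  | appL s _ ih => exact .appL _ (ih n q)
  | appR t _ ih => exact .appR _ (ih n q)
  | lam _ ih => exact .lam (ih (n + 1) (Term.lift 0 q))

/-- Lift-stability of the contextual closure of a substitutive root. -/
theorem St.lift {R : Term K → Term K → Prop} (hsub : Substitutive R) {t s}
    (h : St R t s) (c : ℕ) : St R (Term.lift c t) (Term.lift c s) := by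
  induction h generalizing c with
  | root h => exact .root (root_lift hsub h c)
  | appL s _ ih => exact .appL _ (ih c)
  | appR t _ ih => exact .appR _ (ih c)
  | lam _ ih => exact .lam (ih (c + 1))

/-- Replacing the substituted value by a reduct, stepwise. -/
theorem st_subst_arg {R : Term K → Term K → Prop} (hsub : Substitutive R)
    {a a' : Term K} (h : St R a a') (t : Term K) (n : ℕ) :
    ReflTransGen (St R) (Term.subst n a t) (Term.subst n a' t) := by
  induction t generalizing n a a' with
  | var m =>
    simp only [Term.subst]
    split_ifs
    · exact .single h
    · exact .refl
    · exact .refl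
  | const k => exact .refl
  | lam t ih =>
    simp only [Term.subst]
    exact (ih (h.lift hsub 0) (n + 1)).lift _ (fun _ _ h => St.lam h)
  | app t s iht ihs =>
    simp only [Term.subst]
    calc Term.app (Term.subst n a t) (Term.subst n a s)
        _ = Term.app (Term.subst n a t) (Term.subst n a s) := rfl
    exact ((iht h n).lift _ (fun _ _ h => St.appL _ h)).trans
      ((ihs h n).lift _ (fun _ _ h => St.appR _ h))
open Term Relation

/-- Parallel βv-reduction. -/
inductive Pv : Term K → Term K → Prop
  | var (n) : Pv (.var n) (.var n)
  | const (k) : Pv (.const k) (.const k)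
  | lam {t t'} : Pv t t' → Pv (.lam t) (.lam t')
  | app {t t' s s'} : Pv t t' → Pv s s' → Pv (.app t s) (.app t' s')
  | beta {p p' v v'} : Pv p p' → Pv v v' → v.IsValue →
      Pv (.app (.lam p) v) (Term.subst 0 v' p')

/-- Internal (non-weak) parallel βv-reduction. -/
inductive Piv : Term K → Term K → Prop
  | var (n) : Piv (.var n) (.var n)
  | const (k) : Piv (.const k) (.const k)
  | lam {t t'} : Pv t t' → Piv (.lam t) (.lam t')
  | app {t t' s s'} : Piv t t' → Piv s s' → Piv (.app t s) (.app t' s')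

theorem Pv.refl : ∀ t : Term K, Pv t t
  | .var n => .var n
  | .const k => .const k
  | .lam t => .lam (Pv.refl t)
  | .app t s => .app (Pv.refl t) (Pv.refl s)

theorem Piv.refl : ∀ t : Term K, Piv t t
  | .var n => .var n
  | .const k => .const k
  | .lam t => .lam (Pv.refl t)
  | .app t s => .app (Piv.refl t) (Piv.refl s)

theorem Piv.pv {t s : Term K} (h : Piv t s) : Pv t s := by
  induction h with
  | var n => exact .var n
  | const k => exact .const k
  | lam h => exact .lam h
  | app _ _ iht ihs => exact .app iht ihs

theorem Pv.value {v v' : Term K} (h : Pv v v') (hv : v.IsValue) : v'.IsValue := by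
  cases h <;> simp_all [IsValue]

theorem Piv.value_rev {v v' : Term K} (h : Piv v v') (hv : v'.IsValue) :
    v.IsValue := by
  cases h <;> simp_all [IsValue]

theorem Pv.piv_of_value {v v' : Term K} (h : Pv v v') (hv : v.IsValue) :
    Piv v v' := by
  cases h with
  | var n => exact .var n
  | const k => exact .const k
  | lam h => exact .lam h
  | app _ _ => simp [IsValue] at hv
  | beta _ _ _ => simp [IsValue] at hv

theorem Pv.lift {t t' : Term K} (h : Pv t t') (c : ℕ) :
    Pv (Term.lift c t) (Term.lift c t') := by
  induction h generalizing c with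
  | var n => simp only [Term.lift]; split_ifs <;> exact .var _
  | const k => exact .const k
  | lam _ ih => exact .lam (ih (c + 1))
  | app _ _ iht ihs => exact .app (iht c) (ihs c)
  | beta hp hv hval ihp ihv =>
    simp only [Term.lift]
    rw [lift_subst_le (Nat.zero_le c)]
    exact .beta (ihp (c + 1)) (ihv c) (hval.lift c)

theorem Pv.subst {t t' q q' : Term K} (h : Pv t t') (hq : Pv q q')
    (hqv : q.IsValue) (hqv' : q'.IsValue) (n : ℕ) :
    Pv (Term.subst n q t) (Term.subst n q' t') := by
  induction h generalizing q q' n with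
  | var m =>
    simp only [Term.subst]; split_ifs
    · exact hq
    · exact .var _
    · exact .var _
  | const k => exact .const k
  | lam _ ih => exact .lam (ih (hq.lift 0) (hqv.lift 0) (hqv'.lift 0) (n + 1))
  | app _ _ iht ihs => exact .app (iht hq hqv hqv' n) (ihs hq hqv hqv' n)
  | beta hp hv hval ihp ihv =>
    simp only [Term.subst]
    rw [subst_subst (Nat.zero_le n)]
    exact .beta (ihp (hq.lift 0) (hqv.lift 0) (hqv'.lift 0) (n + 1))
      (ihv hq hqv hqv' n) (hval.subst hqv n)

theorem Piv.subst {t t' q q' : Term K} (h : Piv t t') (hq : Pv q q')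
    (hqv : q.IsValue) (hqv' : q'.IsValue) (n : ℕ) :
    Piv (Term.subst n q t) (Term.subst n q' t') := by
  induction h generalizing n with
  | var m =>
    simp only [Term.subst]; split_ifs
    · exact hq.piv_of_value hqv
    · exact .var _
    · exact .var _
  | const k => exact .const k
  | lam h => exact .lam (h.subst (hq.lift 0) (hqv.lift 0) (hqv'.lift 0) (n + 1))
  | app _ _ iht ihs => exact .app (iht n) (ihs n)

/-- A βv-root, viewed as a parallel step. -/
theorem betav_pv {t s : Term K} (h : BetavRoot t s) : Pv t s := by
  obtain ⟨p, v, hv, rfl, rfl⟩ := h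
  exact .beta (Pv.refl p) (Pv.refl v) hv

theorem st_betav_pv {t s : Term K} (h : St BetavRoot t s) : Pv t s := by
  induction h with
  | root h => exact betav_pv h
  | appL s _ ih => exact .app ih (Pv.refl s)
  | appR t _ ih => exact .app (Pv.refl t) ih
  | lam _ ih => exact .lam ih

theorem nwk_betav_piv {t s : Term K} (h : NWk BetavRoot t s) : Piv t s := by
  induction h with
  | lam h => exact .lam (st_betav_pv h)
  | appL s _ ih => exact .app ih (Piv.refl s)
  | appR t _ ih => exact .app (Piv.refl t) ih

theorem Pv.st_chain {t s : Term K} (h : Pv t s) :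
    ReflTransGen (St (K := K) BetavRoot) t s := by
  induction h with
  | var n => exact .refl
  | const k => exact .refl
  | lam _ ih => exact ih.lift _ (fun _ _ h => St.lam h)
  | app _ _ iht ihs =>
    exact (iht.lift _ (fun _ _ h => St.appL _ h)).trans
      (ihs.lift _ (fun _ _ h => St.appR _ h))
  | beta hp hv hval ihp ihv =>
    have h1 : ReflTransGen (St (K := K) BetavRoot) (.app (.lam _) _) (.app (.lam _) _) :=
      ((ihp.lift Term.lam (fun _ _ h => St.lam h)).lift _
        (fun _ _ h => St.appL _ h)).trans (ihv.lift _ (fun _ _ h => St.appR _ h))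
    exact h1.trans (.single (.root ⟨_, _, hv.value hval, rfl, rfl⟩))

theorem Piv.nwk_chain {t s : Term K} (h : Piv t s) :
    ReflTransGen (NWk (K := K) BetavRoot) t s := by
  induction h with
  | var n => exact .refl
  | const k => exact .refl
  | lam h => exact (h.st_chain).lift _ (fun _ _ h => NWk.lam h)
  | app _ _ iht ihs =>
    exact (iht.lift _ (fun _ _ h => NWk.appL _ h)).trans
      (ihs.lift _ (fun _ _ h => NWk.appR _ h))

theorem betavRoot_subst {t s q : Term K} (h : BetavRoot t s) (hq : q.IsValue)
    (n : ℕ) : BetavRoot (Term.subst n q t) (Term.subst n q s) := by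
  obtain ⟨p, v, hv, rfl, rfl⟩ := h
  refine ⟨Term.subst (n + 1) (Term.lift 0 q) p, Term.subst n q v, hv.subst hq n, rfl, ?_⟩
  rw [subst_subst (Nat.zero_le n)]

theorem wk_betav_subst {t s q : Term K} (h : Wk BetavRoot t s) (hq : q.IsValue)
    (n : ℕ) : Wk BetavRoot (Term.subst n q t) (Term.subst n q s) := by
  induction h with
  | root h => exact .root (betavRoot_subst h hq n)
  | appL s _ ih => exact .appL _ ih
  | appR t _ ih => exact .appR _ ih
/-- Merge: an internal parallel step followed by a weak step. -/
theorem merge_piv_wk {t u s : Term K} (h : Piv t u) (hw : Wk BetavRoot u s) :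
    ∃ t', Wk BetavRoot t t' ∧ Pv t' s := by
  induction hw generalizing t with
  | @root r r' hr =>
    obtain ⟨p, v, hv, rfl, rfl⟩ := hr
    cases h with
    | @app a _ b _ ha hb =>
      cases ha with
      | @lam p₀ _ hp =>
        have hbv : b.IsValue := hb.value_rev hv
        exact ⟨Term.subst 0 b p₀, .root ⟨p₀, b, hbv, rfl, rfl⟩,
          Pv.subst hp hb.pv hbv hv 0⟩
  | @appL u₁ s₁ u₂ hw ih =>
    cases h with
    | app ha hb =>
      obtain ⟨a', hwa, hpa⟩ := ih ha
      exact ⟨.app a' _, .appL _ hwa, .app hpa hb.pv⟩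
  | @appR u₁ u₂ s₂ hw ih =>
    cases h with
    | app ha hb =>
      obtain ⟨b', hwb, hpb⟩ := ih hb
      exact ⟨.app _ b', .appR _ hwb, .app ha.pv hpb⟩

/-- Split: a parallel step factors as weak steps followed by an internal
parallel step. -/
theorem split_pv {t s : Term K} (h : Pv t s) :
    ∃ u, ReflTransGen (Wk (K := K) BetavRoot) t u ∧ Piv u s := by
  induction h with
  | var n => exact ⟨_, .refl, .var n⟩
  | const k => exact ⟨_, .refl, .const k⟩
  | @lam t t' h _ => exact ⟨.lam t, .refl, .lam h⟩
  | app _ hs iht ihs =>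
    obtain ⟨u₁, hw₁, hi₁⟩ := iht
    obtain ⟨u₂, hw₂, hi₂⟩ := ihs
    exact ⟨.app u₁ u₂,
      ((hw₁.lift _ (fun _ _ h => Wk.appL _ h)).trans
        (hw₂.lift _ (fun _ _ h => Wk.appR _ h))), .app hi₁ hi₂⟩
  | @beta p p' v v' hp hv hval ihp _ =>
    obtain ⟨q, hwq, hiq⟩ := ihp
    have hval' : v'.IsValue := hv.value hval
    refine ⟨Term.subst 0 v q, ?_, Piv.subst hiq hv hval hval' 0⟩
    refine ReflTransGen.head (Wk.root ⟨p, v, hval, rfl, rfl⟩) ?_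
    exact hwq.lift _ (fun _ _ h => wk_betav_subst h hval 0)

/-- An internal parallel step crosses a sequence of weak steps. -/
theorem pie {t u s : Term K} (h : Piv t u)
    (hw : ReflTransGen (Wk (K := K) BetavRoot) u s) :
    ∃ v, ReflTransGen (Wk (K := K) BetavRoot) t v ∧ Piv v s := by
  induction hw using Relation.ReflTransGen.head_induction_on generalizing t with
  | refl => exact ⟨t, .refl, h⟩
  | head h1 _ ih =>
    obtain ⟨t', hwt, hpv⟩ := merge_piv_wk h h1
    obtain ⟨t'', hw'', hpi⟩ := split_pv hpv
    obtain ⟨v, hwv, hpvv⟩ := ih hpi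
    exact ⟨v, (ReflTransGen.head hwt hw'').trans hwv, hpvv⟩

/-- A chain of internal parallel steps crosses a sequence of weak steps. -/
theorem pichain {t u s : Term K} (h : ReflTransGen (Piv (K := K)) t u)
    (hw : ReflTransGen (Wk (K := K) BetavRoot) u s) :
    ∃ v, ReflTransGen (Wk (K := K) BetavRoot) t v ∧ ReflTransGen (Piv (K := K)) v s := by
  induction h generalizing s with
  | refl => exact ⟨s, hw, .refl⟩
  | tail _ hx ih =>
    obtain ⟨w, hww, hpi⟩ := pie hx hw
    obtain ⟨v, hv1, hv2⟩ := ih hww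
    exact ⟨v, hv1, hv2.trans (ReflTransGen.single hpi)⟩

/-- Weak factorization for βv. -/
theorem factor_betav {t s : Term K} (h : ReflTransGen (St (K := K) BetavRoot) t s) :
    ∃ u, ReflTransGen (Wk (K := K) BetavRoot) t u ∧
      ReflTransGen (NWk (K := K) BetavRoot) u s := by
  have main : ∃ u, ReflTransGen (Wk (K := K) BetavRoot) t u ∧
      ReflTransGen (Piv (K := K)) u s := by
    induction h with
    | refl => exact ⟨t, .refl, .refl⟩
    | tail _ hx ih =>
      obtain ⟨u, hwu, hpu⟩ := ih
      rcases st_wk_or_nwk hx with hx | hx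
      · obtain ⟨v, hv1, hv2⟩ := pichain hpu (.single hx)
        exact ⟨v, hwu.trans hv1, hv2⟩
      · exact ⟨u, hwu, hpu.tail (nwk_betav_piv hx)⟩
  obtain ⟨u, hwu, hpu⟩ := main
  refine ⟨u, hwu, ?_⟩
  clear hwu h
  induction hpu with
  | refl => exact .refl
  | tail _ hx ih => exact ih.trans hx.nwk_chain
section Swaps

variable {Rg : Term K → Term K → Prop}

/-- Root linear swap, lifted to weak γ-steps (inductive form). -/
theorem swapA
    (hswap : ∀ t u s, NonWeakStep BetavRoot t u → Rg u s →
      ∃ v, WeakStep Rg t v ∧ ReflTransGen (Step BetavRoot) v s)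
    {t u s : Term K} (h : NWk BetavRoot t u) (hw : Wk Rg u s) :
    ∃ v, Wk Rg t v ∧ ReflTransGen (St (K := K) BetavRoot) v s := by
  induction hw generalizing t with
  | @root r r' hr =>
    obtain ⟨v, hv1, hv2⟩ := hswap _ _ _ (nwk_nonWeakStep h) hr
    exact ⟨v, weakStep_wk hv1, hv2.lift id (fun _ _ h => step_st h)⟩
  | @appL u₁ s₁ u₂ hw ih =>
    cases h with
    | appL _ ha =>
      obtain ⟨v₁, hv1, hv2⟩ := ih ha
      exact ⟨.app v₁ u₂, .appL _ hv1, hv2.lift _ (fun _ _ h => St.appL _ h)⟩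
    | appR _ hb =>
      exact ⟨.app s₁ _, .appL _ hw, .single (.appR _ hb.st)⟩
  | @appR u₁ u₂ s₂ hw ih =>
    cases h with
    | appR _ hb =>
      obtain ⟨v₂, hv1, hv2⟩ := ih hb
      exact ⟨.app u₁ v₂, .appR _ hv1, hv2.lift _ (fun _ _ h => St.appR _ h)⟩
    | appL _ ha =>
      exact ⟨.app _ s₂, .appR _ hw, .single (.appL _ ha.st)⟩

/-- Swap of a non-weak γ-step with a weak βv-step. -/
theorem swapB (hsub : Substitutive Rg)
    {t u s : Term K} (h : NWk Rg t u) (hw : Wk BetavRoot u s) :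
    ∃ v, Wk BetavRoot t v ∧ ReflTransGen (St (K := K) Rg) v s := by
  induction hw generalizing t with
  | @root r r' hr =>
    obtain ⟨p, v, hv, rfl, rfl⟩ := hr
    cases h with
    | appL _ ha =>
      cases ha with
      | @lam p₀ _ hp =>
        exact ⟨Term.subst 0 v p₀, .root ⟨p₀, v, hv, rfl, rfl⟩,
          .single (hp.subst hsub 0 v)⟩
    | appR _ hb =>
      cases hb with
      | @lam q₀ q hq =>
        exact ⟨Term.subst 0 (.lam q₀) p, .root ⟨p, .lam q₀, trivial, rfl, rfl⟩,
          st_subst_arg hsub (St.lam hq) p 0⟩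
      | appL _ _ => exact hv.elim
      | appR _ _ => exact hv.elim
  | @appL u₁ s₁ u₂ hw ih =>
    cases h with
    | appL _ ha =>
      obtain ⟨v₁, hv1, hv2⟩ := ih ha
      exact ⟨.app v₁ u₂, .appL _ hv1, hv2.lift _ (fun _ _ h => St.appL _ h)⟩
    | appR _ hb =>
      exact ⟨.app s₁ _, .appL _ hw, .single (.appR _ hb.st)⟩
  | @appR u₁ u₂ s₂ hw ih =>
    cases h with
    | appR _ hb =>
      obtain ⟨v₂, hv1, hv2⟩ := ih hb
      exact ⟨.app u₁ v₂, .appR _ hv1, hv2.lift _ (fun _ _ h => St.appR _ h)⟩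
    | appL _ ha =>
      exact ⟨.app _ s₂, .appR _ hw, .single (.appL _ ha.st)⟩

/-- Swap of a chain of non-weak βv-steps with a weak γ-step. -/
theorem swapA_chain
    (hswap : ∀ t u s, NonWeakStep BetavRoot t u → Rg u s →
      ∃ v, WeakStep Rg t v ∧ ReflTransGen (Step BetavRoot) v s)
    {t u s : Term K} (h : ReflTransGen (NWk (K := K) BetavRoot) t u) (hw : Wk Rg u s) :
    ∃ v, Wk Rg t v ∧ ReflTransGen (St (K := K) BetavRoot) v s := by
  induction h using Relation.ReflTransGen.head_induction_on with
  | refl => exact ⟨s, hw, .refl⟩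
  | head h1 _ ih =>
    obtain ⟨x, hx1, hx2⟩ := ih
    obtain ⟨w, hw1, hw2⟩ := swapA hswap h1 hx1
    exact ⟨w, hw1, hw2.trans hx2⟩

/-- Swap of a chain of non-weak γ-steps with a weak βv-step. -/
theorem swapB_chain (hsub : Substitutive Rg)
    {t u s : Term K} (h : ReflTransGen (NWk (K := K) Rg) t u) (hw : Wk BetavRoot u s) :
    ∃ v, Wk BetavRoot t v ∧ ReflTransGen (St (K := K) Rg) v s := by
  induction h using Relation.ReflTransGen.head_induction_on with
  | refl => exact ⟨s, hw, .refl⟩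
  | head h1 _ ih =>
    obtain ⟨x, hx1, hx2⟩ := ih
    obtain ⟨w, hw1, hw2⟩ := swapB hsub h1 hx1
    exact ⟨w, hw1, hw2.trans hx2⟩

/-- Weak factorization for γ, in inductive form. -/
theorem factor_g
    (hfact : ∀ t s,
      ReflTransGen (fun a b => WeakStep Rg a b ∨ NonWeakStep Rg a b) t s →
      ∃ u, ReflTransGen (WeakStep Rg) t u ∧ ReflTransGen (NonWeakStep Rg) u s)
    {t s : Term K} (h : ReflTransGen (St (K := K) Rg) t s) :
    ∃ u, ReflTransGen (Wk (K := K) Rg) t u ∧ ReflTransGen (NWk (K := K) Rg) u s := by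
  have h' : ReflTransGen (fun a b => WeakStep Rg a b ∨ NonWeakStep Rg a b) t s := by
    refine h.lift id (fun a b hab => ?_)
    rcases st_wk_or_nwk hab with h | h
    · exact .inl (wk_weakStep h)
    · exact .inr (nwk_nonWeakStep h)
  obtain ⟨u, h1, h2⟩ := hfact t s h'
  exact ⟨u, h1.lift id (fun _ _ h => weakStep_wk h),
    h2.lift id (fun _ _ h => nonWeakStep_nwk h)⟩

end Swaps
section Main

variable {Rg : Term K → Term K → Prop}

/-- A block of non-weak βv-steps crosses a mixed weak chain. -/
theorem core1
    (hswap : ∀ t u s, NonWeakStep BetavRoot t u → Rg u s →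
      ∃ v, WeakStep Rg t v ∧ ReflTransGen (Step BetavRoot) v s)
    {u s : Term K}
    (hE : ReflTransGen (fun a b : Term K => Wk BetavRoot a b ∨ Wk Rg a b) u s) :
    ∀ t, ReflTransGen (NWk (K := K) BetavRoot) t u →
    ∃ v, ReflTransGen (fun a b : Term K => Wk BetavRoot a b ∨ Wk Rg a b) t v ∧
      ReflTransGen (NWk (K := K) BetavRoot) v s := by
  induction hE using Relation.ReflTransGen.head_induction_on with
  | refl => exact fun t ht => ⟨t, .refl, ht⟩
  | @head u u₁ h1 _ ih =>
    intro t ht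
    rcases h1 with h1 | h1
    · -- weak βv step: merge into a βv-chain and refactorize
      have hchain : ReflTransGen (St (K := K) BetavRoot) t u₁ :=
        (ht.lift id (fun _ _ h => h.st)).tail h1.st
      obtain ⟨x, hx1, hx2⟩ := factor_betav hchain
      obtain ⟨v, hv1, hv2⟩ := ih x hx2
      exact ⟨v, (ReflTransGen.mono (fun _ _ h => Or.inl h) _ _ hx1).trans hv1, hv2⟩
    · -- weak γ step: swap, then refactorize the βv-part
      obtain ⟨x, hx1, hx2⟩ := swapA_chain hswap ht h1
      obtain ⟨y, hy1, hy2⟩ := factor_betav hx2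
      obtain ⟨v, hv1, hv2⟩ := ih y hy2
      exact ⟨v, .head (Or.inr hx1) ((ReflTransGen.mono (fun _ _ h => Or.inl h) _ _ hy1).trans hv1),
        hv2⟩

/-- A block of non-weak γ-steps crosses a mixed weak chain. -/
theorem core2
    (hfact : ∀ t s,
      ReflTransGen (fun a b => WeakStep Rg a b ∨ NonWeakStep Rg a b) t s →
      ∃ u, ReflTransGen (WeakStep Rg) t u ∧ ReflTransGen (NonWeakStep Rg) u s)
    (hsub : Substitutive Rg)
    {u s : Term K}
    (hE : ReflTransGen (fun a b : Term K => Wk BetavRoot a b ∨ Wk Rg a b) u s) :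
    ∀ t, ReflTransGen (NWk (K := K) Rg) t u →
    ∃ v, ReflTransGen (fun a b : Term K => Wk BetavRoot a b ∨ Wk Rg a b) t v ∧
      ReflTransGen (NWk (K := K) Rg) v s := by
  induction hE using Relation.ReflTransGen.head_induction_on with
  | refl => exact fun t ht => ⟨t, .refl, ht⟩
  | @head u u₁ h1 _ ih =>
    intro t ht
    rcases h1 with h1 | h1
    · -- weak βv step: swap, then refactorize the γ-part
      obtain ⟨x, hx1, hx2⟩ := swapB_chain hsub ht h1
      obtain ⟨y, hy1, hy2⟩ := factor_g hfact hx2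
      obtain ⟨v, hv1, hv2⟩ := ih y hy2
      exact ⟨v, .head (Or.inl hx1) ((ReflTransGen.mono (fun _ _ h => Or.inr h) _ _ hy1).trans hv1),
        hv2⟩
    · -- weak γ step: merge into a γ-chain and refactorize
      have hchain : ReflTransGen (St (K := K) Rg) t u₁ :=
        (ht.lift id (fun _ _ h => h.st)).tail h1.st
      obtain ⟨x, hx1, hx2⟩ := factor_g hfact hchain
      obtain ⟨v, hv1, hv2⟩ := ih x hx2
      exact ⟨v, (ReflTransGen.mono (fun _ _ h => Or.inr h) _ _ hx1).trans hv1, hv2⟩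

/-- A mixed internal chain crosses a mixed weak chain. -/
theorem main_cross
    (hfact : ∀ t s,
      ReflTransGen (fun a b => WeakStep Rg a b ∨ NonWeakStep Rg a b) t s →
      ∃ u, ReflTransGen (WeakStep Rg) t u ∧ ReflTransGen (NonWeakStep Rg) u s)
    (hswap : ∀ t u s, NonWeakStep BetavRoot t u → Rg u s →
      ∃ v, WeakStep Rg t v ∧ ReflTransGen (Step BetavRoot) v s)
    (hsub : Substitutive Rg)
    {t u : Term K}
    (hI : ReflTransGen (fun a b : Term K => NWk BetavRoot a b ∨ NWk Rg a b) t u) :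
    ∀ s, ReflTransGen (fun a b : Term K => Wk BetavRoot a b ∨ Wk Rg a b) u s →
    ∃ v, ReflTransGen (fun a b : Term K => Wk BetavRoot a b ∨ Wk Rg a b) t v ∧
      ReflTransGen (fun a b : Term K => NWk BetavRoot a b ∨ NWk Rg a b) v s := by
  induction hI with
  | refl => exact fun s hs => ⟨s, hs, .refl⟩
  | @tail b u _ hx ih =>
    intro s hs
    rcases hx with hx | hx
    · obtain ⟨w, hw1, hw2⟩ := core1 hswap hs b (.single hx)
      obtain ⟨v, hv1, hv2⟩ := ih w hw1
      exact ⟨v, hv1, hv2.trans (ReflTransGen.mono (fun _ _ h => Or.inl h) _ _ hw2)⟩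
    · obtain ⟨w, hw1, hw2⟩ := core2 hfact hsub hs b (.single hx)
      obtain ⟨v, hv1, hv2⟩ := ih w hw1
      exact ⟨v, hv1, hv2.trans (ReflTransGen.mono (fun _ _ h => Or.inr h) _ _ hw2)⟩

end Main

/-- Test for modular weak factorization in call-by-value: if →γ weak-factorizes,
the root linear swap ¬w→βv · ↦γ ⊆ w→γ · (→βv)* holds, and ↦γ is substitutive,
then →βv ∪ →γ satisfies weak factorization. -/
theorem test_modular_weak_factorization {K : Type} (Rg : Term K → Term K → Prop)
    (hfact : ∀ t s,
      Relation.ReflTransGen (fun a b => WeakStep Rg a b ∨ NonWeakStep Rg a b) t s →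
      ∃ u, Relation.ReflTransGen (WeakStep Rg) t u ∧
        Relation.ReflTransGen (NonWeakStep Rg) u s)
    (hswap : ∀ t u s, NonWeakStep BetavRoot t u → Rg u s →
      ∃ v, WeakStep Rg t v ∧ Relation.ReflTransGen (Step BetavRoot) v s)
    (hsub : Substitutive Rg) :
    ∀ t s, Relation.ReflTransGen (fun a b => Step BetavRoot a b ∨ Step Rg a b) t s →
      ∃ u, Relation.ReflTransGen
          (fun a b => WeakStep BetavRoot a b ∨ WeakStep Rg a b) t u ∧
        Relation.ReflTransGen
          (fun a b => NonWeakStep BetavRoot a b ∨ NonWeakStep Rg a b) u s := by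
  intro t s h
  have key : ∃ u, ReflTransGen (fun a b : Term K => Wk BetavRoot a b ∨ Wk Rg a b) t u ∧
      ReflTransGen (fun a b : Term K => NWk BetavRoot a b ∨ NWk Rg a b) u s := by
    induction h with
    | refl => exact ⟨t, .refl, .refl⟩
    | @tail b s' _ hx ih =>
      obtain ⟨u, h1, h2⟩ := ih
      rcases hx with hx | hx
      · rcases st_wk_or_nwk (step_st hx) with hw | hw
        · obtain ⟨v, hv1, hv2⟩ :=
            main_cross hfact hswap hsub h2 s' (.single (Or.inl hw))
          exact ⟨v, h1.trans hv1, hv2⟩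
        · exact ⟨u, h1, h2.tail (Or.inl hw)⟩
      · rcases st_wk_or_nwk (step_st hx) with hw | hw
        · obtain ⟨v, hv1, hv2⟩ :=
            main_cross hfact hswap hsub h2 s' (.single (Or.inr hw))
          exact ⟨v, h1.trans hv1, hv2⟩
        · exact ⟨u, h1, h2.tail (Or.inr hw)⟩
  obtain ⟨u, h1, h2⟩ := key
  refine ⟨u, h1.lift id (fun _ _ h => ?_),
    h2.lift id (fun _ _ h => ?_)⟩
  · exact h.imp wk_weakStep wk_weakStep
  · exact h.imp nwk_nonWeakStep nwk_nonWeakStep
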